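/- arXiv:1705.03876 — 4 statements merged into one kernel-verified Lean document; each statement's English description precedes it below -/
import Mathlib

section
/- For every i ≥ 1, the word T_{2i} is a palindrome (it equals its own reversal). -/
def wcompl (w : List Bool) : List Bool := w.map (fun b => !b)

def T : ℕ → List Bool
  | 0 => [false]
  | i + 1 => T i ++ wcompl (T i)

lemma wcompl_append (u v : List Bool) : wcompl (u ++ v) = wcompl u ++ wcompl v := by
  simp [wcompl]

lemma wcompl_reverse (u : List Bool) : wcompl u.reverse = (wcompl u).reverse := by
  simp [wcompl]

lemma wcompl_wcompl (u : List Bool) : wcompl (wcompl u) = u := by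
  induction u with
  | nil => rfl
  | cons b t ih => simp [wcompl] at ih ⊢; exact ih

lemma key : ∀ n : ℕ, (T (2*n+2)).reverse = T (2*n+2) ∧
    (T (2*n+3)).reverse = wcompl (T (2*n+3)) := by
  intro n
  induction n with
  | zero => constructor <;> decide
  | succ m ih =>
    obtain ⟨_, h2⟩ := ih
    have e1 : 2 * (m+1) + 2 = (2*m+3) + 1 := by ring
    have heven : (T (2*(m+1)+2)).reverse = T (2*(m+1)+2) := by
      rw [e1, T]
      simp [List.reverse_append, ← wcompl_reverse, h2, wcompl_wcompl]
    constructor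
    · exact heven
    · have e2 : 2 * (m+1) + 3 = (2*(m+1)+2) + 1 := by ring
      rw [e2, T]
      simp [List.reverse_append, ← wcompl_reverse, heven, wcompl_append, wcompl_wcompl]

theorem thue_morse_even_palindrome :
    ∀ i : ℕ, 1 ≤ i → (T (2 * i)).reverse = T (2 * i) := by
  intro i hi
  obtain ⟨n, rfl⟩ := Nat.exists_eq_add_of_le hi
  have := (key n).1
  have e : 2 * (1 + n) = 2 * n + 2 := by ring
  rw [e]; exact this
end

section
/- The Thue–Morse sequence contains no cube: there is no nonempty finite binary word X and index j such that XXX occurs as a factor of the Thue–Morse sequence starting at position j. -/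
open Fin.NatCast in
/-- The Thue–Morse sequence. -/
def t (i : ℕ) : Fin 2 := ((Nat.digits 2 i).count 1 : Fin 2)

/-- The word `X` occurs in the Thue–Morse sequence at position `j`. -/
def OccursAt (X : List (Fin 2)) (j : ℕ) : Prop :=
  ∀ m, m < X.length → X.getD m 0 = t (j + m)

/-!
A cube `XXX` with `|X| = n` contains an overlap: a factor of length `2n + 1` with period `n`.
Thue–Morse has no overlap, by descent on `n`. Since `t (2k) = t k` and `t (2k+1) = t k + 1`,
an overlap of even period `2m` decimates to one of period `m`. An overlap of odd period
pairs each block `t (2k), t (2k+1)` with a block shifted by one, which forces `t (k+1) = t k`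
along the overlap; this yields three equal consecutive letters, impossible since every
block `t (2k), t (2k+1)` contains both letters.
-/

namespace ThueMorse

theorem t_two_mul (k : ℕ) : t (2 * k) = t k := by
  rcases k.eq_zero_or_pos with rfl | hk
  · rfl
  · unfold t
    rw [Nat.digits_def' (by norm_num) (by omega)]
    simp [Nat.mul_mod_right]

theorem t_two_mul_add_one (k : ℕ) : t (2 * k + 1) = t k + 1 := by
  unfold t
  rw [Nat.digits_def' (by norm_num) (by omega),
    show (2 * k + 1) % 2 = 1 by omega, show (2 * k + 1) / 2 = k by omega, List.count_cons_self]
  exact Fin.ext (Nat.add_mod _ _ _)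

theorem fin_two_add_one_add_one (x : Fin 2) : x + 1 + 1 = x := by
  revert x
  decide

theorem t_ne_succ_of_even {k : ℕ} (hk : Even k) : t (k + 1) ≠ t k := by
  obtain ⟨a, rfl⟩ := hk
  rw [← two_mul, t_two_mul, t_two_mul_add_one]
  simp

theorem t_succ_succ_ne_of_t_succ_eq {k : ℕ} (h : t (k + 1) = t k) : t (k + 2) ≠ t (k + 1) := by
  rcases k.even_or_odd with hk | hk
  · exact absurd h (t_ne_succ_of_even hk)
  · exact t_ne_succ_of_even hk.add_one

/-- The factor of length `2n + 1` starting at `j` has period `n`. -/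
def HasOverlap (n j : ℕ) : Prop :=
  ∀ x, j ≤ x → x ≤ j + n → t (x + n) = t x

theorem HasOverlap.half {m j : ℕ} (h : HasOverlap (2 * m) j) : HasOverlap m (j / 2) := by
  intro y hy hym
  by_cases hj : j ≤ 2 * y
  · have := h (2 * y) hj (by omega)
    rwa [← mul_add, t_two_mul, t_two_mul] at this
  · have := h (2 * y + 1) (by omega) (by omega)
    rwa [show 2 * y + 1 + 2 * m = 2 * (y + m) + 1 by ring, t_two_mul_add_one,
      t_two_mul_add_one, add_left_inj] at this

theorem not_hasOverlap_one (j : ℕ) : ¬ HasOverlap 1 j := fun h =>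
  t_succ_succ_ne_of_t_succ_eq (h j le_rfl (by omega)) (h (j + 1) (by omega) le_rfl)

theorem HasOverlap.t_succ_eq_and_t_add_eq {h j k : ℕ} (hov : HasOverlap (2 * h + 1) j)
    (hjk : j ≤ 2 * k) (hkj : 2 * k + 2 ≤ j + (2 * h + 1)) :
    t (k + 1) = t k ∧ t (k + h) = t k + 1 := by
  have e₀ := hov (2 * k) hjk (by omega)
  have e₁ := hov (2 * k + 1) (by omega) (by omega)
  have e₂ := hov (2 * (k + 1)) (by omega) (by omega)
  rw [show 2 * k + (2 * h + 1) = 2 * (k + h) + 1 by ring, t_two_mul_add_one, t_two_mul] at e₀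
  rw [show 2 * k + 1 + (2 * h + 1) = 2 * (k + h + 1) by ring, t_two_mul,
    t_two_mul_add_one] at e₁
  rw [show 2 * (k + 1) + (2 * h + 1) = 2 * (k + h + 1) + 1 by ring, t_two_mul_add_one,
    t_two_mul] at e₂
  constructor
  · rw [← e₂, e₁, fin_two_add_one_add_one]
  · rw [← e₀, fin_two_add_one_add_one]

theorem not_hasOverlap_odd {h : ℕ} (hh : 0 < h) (j : ℕ) : ¬ HasOverlap (2 * h + 1) j := by
  intro hov
  obtain ⟨k, hjk, hkj⟩ : ∃ k, j ≤ 2 * k ∧ 2 * k ≤ j + 1 := ⟨(j + 1) / 2, by omega, by omega⟩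
  obtain ⟨hk, hkh⟩ := hov.t_succ_eq_and_t_add_eq hjk (by omega)
  rcases (show h = 1 ∨ 2 ≤ h by omega) with rfl | h2
  · rw [hk] at hkh
    simp at hkh
  · obtain ⟨hk', -⟩ := hov.t_succ_eq_and_t_add_eq (k := k + 1) (by omega) (by omega)
    exact t_succ_succ_ne_of_t_succ_eq hk hk'

theorem not_hasOverlap {n : ℕ} (hn : 0 < n) (j : ℕ) : ¬ HasOverlap n j := by
  induction n using Nat.strong_induction_on generalizing j with
  | _ n ih =>
  intro hov
  obtain ⟨m, rfl | rfl⟩ := Nat.even_or_odd' n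
  · exact ih m (by omega) (by omega) _ hov.half
  · rcases m.eq_zero_or_pos with rfl | hm
    · exact not_hasOverlap_one j hov
    · exact not_hasOverlap_odd hm j hov

theorem OccursAt.hasOverlap {X : List (Fin 2)} {j : ℕ} (hX : OccursAt (X ++ X ++ X) j) :
    HasOverlap X.length j := by
  intro x hjx hxj
  obtain ⟨i, rfl⟩ := Nat.exists_eq_add_of_le hjx
  rcases Nat.eq_zero_or_pos X.length with hn | hn
  · simp [hn]
  have hlen : (X ++ X ++ X).length = 3 * X.length := by simp only [List.length_append]; ring
  rw [add_assoc, ← hX i (by omega), ← hX _ (by omega), List.append_assoc,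
    List.getD_append_right X (X ++ X) 0 (i + X.length) (by omega), Nat.add_sub_cancel,
    ← List.append_assoc, List.getD_append (X ++ X) X 0 i (by simp only [List.length_append]; omega)]

end ThueMorse

open ThueMorse in
theorem thue_morse_cubefree :
    ¬ ∃ (X : List (Fin 2)) (j : ℕ), X ≠ [] ∧ OccursAt (X ++ X ++ X) j := by
  rintro ⟨X, j, hX, hXXX⟩
  exact not_hasOverlap (List.length_pos_iff.mpr hX) j hXXX.hasOverlap
end

section
/- The Thue–Morse sequence is overlap-free: there is no letter a, word X, and position j such that aXaXa occurs as a factor of the Thue–Morse sequence. -/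
/-!
Since `t (2x) = t x` and `t (2x + 1) = t x + 1`, an overlap of period `2m` at position `j` halves
to an overlap of period `m` at `j / 2`, so it suffices to exclude odd periods `n`. An odd shift
carries a pair at an even position `2x`, where `t (2x) ≠ t (2x + 1)`, to a pair at an odd
position `2y + 1`, where it forces `t y = t (y + 1)`. The pairs at offsets 0 and 2 of the overlap
thus give three equal consecutive letters, impossible as one of any two consecutive indices is even.
-/

lemma t_two_mul (x : ℕ) : t (2 * x) = t x := by
  rcases Nat.eq_zero_or_pos x with rfl | hx
  · rfl
  · unfold t
    rw [Nat.digits_def' one_lt_two (by omega)]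
    simp

open Fin.NatCast in
lemma t_two_mul_add_one (x : ℕ) : t (2 * x + 1) = t x + 1 := by
  unfold t
  rw [Nat.digits_def' one_lt_two (by omega), Nat.mul_add_mod_self_left,
    Nat.mul_add_div two_pos]
  simp only [Nat.one_mod, Nat.div_eq_of_lt one_lt_two, add_zero, List.count_cons_self]
  exact Nat.cast_succ _

lemma t_two_mul_add_eq_iff {r : ℕ} (hr : r < 2) (x y : ℕ) :
    t (2 * x + r) = t (2 * y + r) ↔ t x = t y := by
  interval_cases r
  · simp [t_two_mul]
  · simp [t_two_mul_add_one]

lemma t_two_mul_ne (x : ℕ) : t (2 * x) ≠ t (2 * x + 1) := by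
  simp [t_two_mul, t_two_mul_add_one]

lemma t_eq_t_succ_of_pair_eq {x y : ℕ} (h₀ : t (2 * x) = t (2 * y + 1))
    (h₁ : t (2 * x + 1) = t (2 * y + 2)) : t y = t (y + 1) := by
  rw [t_two_mul, t_two_mul_add_one] at h₀
  rw [t_two_mul_add_one, h₀, show 2 * y + 2 = 2 * (y + 1) by ring, t_two_mul] at h₁
  rwa [add_assoc, show (1 + 1 : Fin 2) = 0 from rfl, add_zero] at h₁

lemma not_three_consecutive_eq (m : ℕ) : ¬ (t m = t (m + 1) ∧ t (m + 1) = t (m + 2)) := by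
  rintro ⟨h₁, h₂⟩
  rcases Nat.even_or_odd' m with ⟨x, rfl | rfl⟩
  · exact t_two_mul_ne x h₁
  · exact t_two_mul_ne (x + 1) h₂

/-- The factor of length `2n + 1` at position `j` has period `n`, i.e. it is an overlap `aXaXa`
with `|aX| = n`. -/
def HasOverlap (n j : ℕ) : Prop := ∀ i ≤ n, t (j + i) = t (j + i + n)

lemma HasOverlap.half {m j : ℕ} (h : HasOverlap (2 * m) j) : HasOverlap m (j / 2) := by
  intro c hc
  have hc' := h (2 * c) (by omega)
  rw [show j + 2 * c = 2 * (j / 2 + c) + j % 2 by omega,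
    show 2 * (j / 2 + c) + j % 2 + 2 * m = 2 * (j / 2 + c + m) + j % 2 by ring] at hc'
  exact (t_two_mul_add_eq_iff (Nat.mod_lt j two_pos) _ _).1 hc'

lemma not_hasOverlap_odd (k j : ℕ) : ¬ HasOverlap (2 * k + 1) j := by
  intro h
  replace h : ∀ {i p q}, i ≤ 2 * k + 1 → j + i = p → j + i + (2 * k + 1) = q → t p = t q :=
    fun hi hp hq => hp ▸ hq ▸ h _ hi
  rcases Nat.eq_zero_or_pos k with rfl | hk
  · exact not_three_consecutive_eq j
      ⟨h (i := 0) (by omega) rfl rfl, h (i := 1) (by omega) rfl rfl⟩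
  rcases Nat.even_or_odd' j with ⟨a, rfl | rfl⟩
  · exact not_three_consecutive_eq (a + k)
      ⟨t_eq_t_succ_of_pair_eq (x := a) (h (i := 0) (by omega) (by ring) (by ring))
          (h (i := 1) (by omega) (by ring) (by ring)),
        t_eq_t_succ_of_pair_eq (x := a + 1) (h (i := 2) (by omega) (by ring) (by ring))
          (h (i := 3) (by omega) (by ring) (by ring))⟩
  · exact not_three_consecutive_eq a
      ⟨t_eq_t_succ_of_pair_eq (x := a + k + 1) (h (i := 0) (by omega) (by ring) (by ring)).symm
          (h (i := 1) (by omega) (by ring) (by ring)).symm,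
        t_eq_t_succ_of_pair_eq (x := a + k + 2) (h (i := 2) (by omega) (by ring) (by ring)).symm
          (h (i := 3) (by omega) (by ring) (by ring)).symm⟩

theorem not_hasOverlap {n : ℕ} (hn : 1 ≤ n) (j : ℕ) : ¬ HasOverlap n j := by
  induction n using Nat.strong_induction_on generalizing j with
  | _ n ih =>
  rcases Nat.even_or_odd' n with ⟨m, rfl | rfl⟩
  · exact fun h => ih m (by omega) (by omega) _ h.half
  · exact not_hasOverlap_odd m j

lemma OccursAt.hasOverlap {a : Fin 2} {X : List (Fin 2)} {j : ℕ}
    (h : OccursAt ([a] ++ X ++ [a] ++ X ++ [a]) j) : HasOverlap (X.length + 1) j := by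
  have hQ : [a] ++ X ++ [a] ++ X ++ [a] = (a :: X ++ [a]) ++ (X ++ [a]) := by simp
  have hPQ : [a] ++ X ++ [a] ++ X ++ [a] = (a :: X) ++ (a :: X ++ [a]) := by simp
  intro i hi
  rw [← h i (by simp; omega), add_assoc, ← h (i + (X.length + 1)) (by simp; omega)]
  calc _ = (a :: X ++ [a]).getD i 0 := by
        rw [hQ, List.getD_append _ (X ++ [a]) _ _ (by simp; omega)]
    _ = _ := by rw [hPQ, List.getD_append_right (a :: X) (a :: X ++ [a]) _ _ (by simp)]; simp

theorem thue_morse_overlap_free :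
    ¬ ∃ (a : Fin 2) (X : List (Fin 2)) (j : ℕ),
        OccursAt ([a] ++ X ++ [a] ++ X ++ [a]) j := by
  rintro ⟨a, X, j, h⟩
  exact not_hasOverlap (Nat.le_add_left 1 _) j h.hasOverlap
end

section
/- Compression is compatible with concatenation up to merging equal boundary letters: if X is a compressed version of Y and X' is a compressed version of Y', then C(X, X') is a compressed version of YY', where C(X, X') = X ++ X' if the last letter of X differs from the first letter of X', and C(X, X') = A ++ X' if X = A·a and X' = a·B share boundary letter a. -/
/-- `X` is a compressed version of `Y`. -/
def IsCompression {α : Type*} (X Y : List α) : Prop :=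
  X.Chain' (· ≠ ·) ∧
  ∃ f : Fin Y.length → Fin X.length,
    Function.Surjective f ∧
    (∀ h : 0 < Y.length, (f ⟨0, h⟩ : ℕ) = 0) ∧
    (∀ (k : ℕ) (h : k + 1 < Y.length),
      (f ⟨k + 1, h⟩ : ℕ) = f ⟨k, Nat.lt_of_succ_lt h⟩ ∨
      (f ⟨k + 1, h⟩ : ℕ) = f ⟨k, Nat.lt_of_succ_lt h⟩ + 1) ∧
    (∀ k : Fin Y.length, Y.get k = X.get (f k))

/-- The buffer-combining function: concatenate, merging equal boundary letters. -/
def combine {α : Type*} [DecidableEq α] (X X' : List α) : List α :=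
  match X.getLast?, X'.head? with
  | some a, some b => if a = b then X.dropLast ++ X' else X ++ X'
  | _, _ => X ++ X'

/-!
Placing compression maps `Y → X` and `Y' → X'` side by side, the second one shifted by `|X|`,
gives a compression map `YY' → XX'`; it steps by one across the boundary because the last
letter of `Y` goes to the last letter of `X`. If the boundary letters agree, `XX' = A·a·a·B`
is in turn compressed onto `C(X, X') = A·a·B`, and compression maps compose. Merging the two
copies of `a` is also what keeps consecutive letters of `C(X, X')` distinct.
-/

section

variable {α : Type*}

-- The paper's compression map, shifted to 0-based indices and extended arbitrarily to all of `ℕ`.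
structure IsCompressionMap (f : ℕ → ℕ) (X Y : List α) : Prop where
  map_zero : f 0 = 0
  step : ∀ k, k + 1 < Y.length → f (k + 1) = f k ∨ f (k + 1) = f k + 1
  surj : ∀ j < X.length, ∃ k < Y.length, f k = j
  lt_length : ∀ k < Y.length, f k < X.length
  getElem_eq : ∀ k (hk : k < Y.length), Y[k] = X[f k]'(lt_length k hk)

theorem isCompression_iff {X Y : List α} :
    IsCompression X Y ↔ X.IsChain (· ≠ ·) ∧ ∃ f, IsCompressionMap f X Y := by
  constructor
  · rintro ⟨hc, f, hsurj, h0, hstep, hget⟩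
    refine ⟨hc, fun k => if h : k < Y.length then f ⟨k, h⟩ else 0,
      ⟨?_, fun k hk => ?_, fun j hj => ?_, fun k hk => ?_, fun k hk => ?_⟩⟩
    · by_cases h : 0 < Y.length <;> simp [h, h0]
    · simpa [hk, Nat.lt_of_succ_lt hk] using hstep k hk
    · obtain ⟨k, hk⟩ := hsurj ⟨j, hj⟩
      exact ⟨k, k.isLt, by simp [hk]⟩
    · simp [hk]
    · simpa [hk] using hget ⟨k, hk⟩
  · rintro ⟨hc, f, hf⟩
    refine ⟨hc, fun k => ⟨f k, hf.lt_length k k.isLt⟩, fun j => ?_, fun _ => hf.map_zero,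
      hf.step, fun k => hf.getElem_eq k k.isLt⟩
    obtain ⟨k, hk, hfk⟩ := hf.surj j j.isLt
    exact ⟨⟨k, hk⟩, Fin.ext hfk⟩

namespace IsCompressionMap

variable {f g : ℕ → ℕ} {X X' Y Y' M : List α}

theorem length_eq_zero_iff (hf : IsCompressionMap f X Y) : Y.length = 0 ↔ X.length = 0 := by
  constructor
  · intro hY
    by_contra hX
    obtain ⟨k, hk, -⟩ := hf.surj 0 (by omega)
    omega
  · intro hX
    by_contra hY
    have := hf.lt_length 0 (by omega)
    omega

theorem le_of_le (hf : IsCompressionMap f X Y) {k l : ℕ} (hkl : k ≤ l) (hl : l < Y.length) :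
    f k ≤ f l := by
  induction l, hkl using Nat.le_induction with
  | base => exact le_rfl
  | succ l _ ih =>
    have := ih (Nat.lt_of_succ_lt hl)
    rcases hf.step l hl with h | h <;> omega

theorem apply_length_sub_one (hf : IsCompressionMap f X Y) :
    f (Y.length - 1) = X.length - 1 := by
  rcases Nat.eq_zero_or_pos X.length with hX | hX
  · simp [hX, hf.length_eq_zero_iff.mpr hX, hf.map_zero]
  · obtain ⟨k, hk, hfk⟩ := hf.surj (X.length - 1) (by omega)
    have := hf.le_of_le (Nat.le_sub_one_of_lt hk) (by omega)
    have := hf.lt_length (Y.length - 1) (by omega)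
    omega

theorem comp (hg : IsCompressionMap g X M) (hf : IsCompressionMap f M Y) :
    IsCompressionMap (g ∘ f) X Y where
  map_zero := by simp [hf.map_zero, hg.map_zero]
  step k hk := by
    rcases hf.step k hk with h | h
    · simp [h]
    · simpa [h] using hg.step (f k) (h ▸ hf.lt_length (k + 1) hk)
  surj j hj := by
    obtain ⟨m, hm, rfl⟩ := hg.surj j hj
    obtain ⟨k, hk, rfl⟩ := hf.surj m hm
    exact ⟨k, hk, rfl⟩
  lt_length k hk := hg.lt_length (f k) (hf.lt_length k hk)
  getElem_eq k hk := (hf.getElem_eq k hk).trans (hg.getElem_eq _ _)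

theorem append (hf : IsCompressionMap f X Y) (hg : IsCompressionMap g X' Y') :
    IsCompressionMap (fun k => if k < Y.length then f k else X.length + g (k - Y.length))
      (X ++ X') (Y ++ Y') := by
  have hXY := hf.length_eq_zero_iff
  have hlast := hf.apply_length_sub_one
  refine ⟨?_, fun k hk => ?_, fun j hj => ?_, fun k hk => ?_, fun k hk => ?_⟩
  · by_cases hY : 0 < Y.length
    · simp [hY, hf.map_zero]
    · simp [hY, hXY.mp (by omega), hg.map_zero]
  · simp only [List.length_append] at hk
    by_cases hk₁ : k + 1 < Y.length
    · simpa [hk₁, Nat.lt_of_succ_lt hk₁] using hf.step k hk₁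
    by_cases hk₂ : k + 1 = Y.length
    · rw [if_neg hk₁, if_pos (by omega), hk₂, Nat.sub_self, hg.map_zero,
        show k = Y.length - 1 by omega, hlast]
      have := hXY.not.mp (by omega)
      omega
    · rw [if_neg hk₁, if_neg (by omega), show k + 1 - Y.length = k - Y.length + 1 by omega]
      rcases hg.step (k - Y.length) (by omega) with h | h <;> simp [h, Nat.add_assoc]
  · simp only [List.length_append] at hj ⊢
    by_cases hjX : j < X.length
    · obtain ⟨k, hk, rfl⟩ := hf.surj j hjX
      exact ⟨k, by omega, by simp [hk]⟩
    · obtain ⟨k, hk, hgk⟩ := hg.surj (j - X.length) (by omega)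
      exact ⟨Y.length + k, by omega, by simp [hgk]; omega⟩
  · simp only [List.length_append] at hk ⊢
    by_cases hkY : k < Y.length
    · simpa [hkY] using Nat.lt_add_right _ (hf.lt_length k hkY)
    · simpa [hkY] using hg.lt_length (k - Y.length) (by omega)
  · by_cases hkY : k < Y.length
    · simp [hkY, hf.lt_length k hkY, hf.getElem_eq]
    · simp [List.getElem_append, hkY, hg.getElem_eq]

end IsCompressionMap

theorem isCompressionMap_id (X : List α) : IsCompressionMap id X X where
  map_zero := rfl
  step _ _ := Or.inr rfl
  surj j hj := ⟨j, hj, rfl⟩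
  lt_length _ hk := hk
  getElem_eq _ _ := rfl

theorem isCompressionMap_replicate (a : α) (n : ℕ) :
    IsCompressionMap (fun _ => 0) [a] (List.replicate (n + 1) a) where
  map_zero := rfl
  step _ _ := Or.inl rfl
  surj j hj := ⟨0, by simp, by simp at hj; omega⟩
  lt_length _ _ := by simp
  getElem_eq _ _ := by simp

section Combine

variable [DecidableEq α]

@[simp]
theorem combine_nil_left (X' : List α) : combine [] X' = X' := by
  simp [combine]

@[simp]
theorem combine_nil_right (X : List α) : combine X [] = X := by
  unfold combine
  split <;> simp_all

theorem combine_concat_cons_self (A B : List α) (a : α) :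
    combine (A ++ [a]) (a :: B) = A ++ a :: B := by
  simp [combine]

theorem combine_concat_cons_of_ne (A B : List α) {a b : α} (hab : a ≠ b) :
    combine (A ++ [a]) (b :: B) = A ++ [a] ++ b :: B := by
  simp [combine, hab]

theorem isChain_combine {X X' : List α} (hX : X.IsChain (· ≠ ·)) (hX' : X'.IsChain (· ≠ ·)) :
    (combine X X').IsChain (· ≠ ·) := by
  rcases X.eq_nil_or_concat' with rfl | ⟨A, a, rfl⟩
  · simpa
  cases X' with
  | nil => simpa
  | cons b B =>
    by_cases hab : a = b
    · subst hab
      rw [combine_concat_cons_self]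
      exact List.isChain_split.mpr ⟨hX, hX'⟩
    · rw [combine_concat_cons_of_ne A B hab]
      exact hX.append hX' (by simp [hab])

theorem exists_isCompressionMap_combine (X X' : List α) :
    ∃ φ, IsCompressionMap φ (combine X X') (X ++ X') := by
  rcases X.eq_nil_or_concat' with rfl | ⟨A, a, rfl⟩
  · exact ⟨id, by simpa using isCompressionMap_id X'⟩
  cases X' with
  | nil => exact ⟨id, by simpa using isCompressionMap_id (A ++ [a])⟩
  | cons b B =>
    by_cases hab : a = b
    · subst hab
      rw [combine_concat_cons_self]
      have := ((isCompressionMap_id A).append (isCompressionMap_replicate a 1)).append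
        (isCompressionMap_id B)
      exact ⟨_, by simpa using this⟩
    · rw [combine_concat_cons_of_ne A B hab]
      exact ⟨id, isCompressionMap_id _⟩

end Combine

end

theorem compression_combine {α : Type*} [DecidableEq α]
    (X Y X' Y' : List α) (h : IsCompression X Y) (h' : IsCompression X' Y') :
    IsCompression (combine X X') (Y ++ Y') := by
  rw [isCompression_iff] at h h' ⊢
  obtain ⟨hX, f, hf⟩ := h
  obtain ⟨hX', g, hg⟩ := h'
  obtain ⟨φ, hφ⟩ := exists_isCompressionMap_combine X X'
  exact ⟨isChain_combine hX hX', _, hφ.comp (hf.append hg)⟩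
end
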